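/- arXiv:2010.01738 — 4 statements merged into one kernel-verified Lean document; each statement's English description precedes it below -/
import Mathlib

section
/- Let N ≥ 1, let φ : Fin N → ℝ satisfy the summation constraint ∑_{p=1}^N φ_p = 2 − N, and let B : Fin N → ℝ. Then the volume distribution functions L_p = ∑_{q=1}^N W_{p,q}(φ) B_q satisfy the summation constraint for volume distribution: ∑_{p=1}^N L_p = 0. -/
/-- The volume-distribution weight matrix:
`W φ p q = (1+φ_p)(1-φ_q)` if `p = q` and `-(1+φ_p)(1+φ_q)` otherwise. -/
def volW {N : ℕ} (φ : Fin N → ℝ) (p q : Fin N) : ℝ :=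
  if p = q then (1 + φ p) * (1 - φ q) else -((1 + φ p) * (1 + φ q))

/-- If the order parameters satisfy the summation constraint `∑ φ_p = 2 - N`, then
the volume distribution functions `L_p = ∑ q, W_{p,q}(φ) B_q` satisfy the summation
constraint for volume distribution: `∑ p, L_p = 0`. -/
theorem volDist_sum_zero (N : ℕ) (hN : 1 ≤ N) (φ : Fin N → ℝ) (B : Fin N → ℝ)
    (hsum : ∑ p, φ p = 2 - (N : ℝ)) :
    ∑ p, (∑ q, volW φ p q * B q) = 0 := by
  rw [Finset.sum_comm]
  have h1 : ∑ p, (1 + φ p) = 2 := by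
    rw [Finset.sum_add_distrib, hsum]
    simp
  have key : ∀ q, ∑ p, volW φ p q = 0 := by
    intro q
    have hW : ∀ p, volW φ p q =
        (if p = q then 2 * (1 + φ p) else 0) - (1 + φ p) * (1 + φ q) := by
      intro p
      unfold volW
      by_cases h : p = q <;> simp [h] <;> ring
    simp only [hW, Finset.sum_sub_distrib, Finset.sum_ite_eq' Finset.univ q,
      Finset.mem_univ, if_true, ← Finset.sum_mul, h1]
    ring
  calc ∑ q, ∑ p, volW φ p q * B q
      = ∑ q, (∑ p, volW φ p q) * B q := by
        simp [Finset.sum_mul]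
    _ = 0 := by simp [key]
end

section
/- Let N ≥ 1 and let φ : Fin N → ℝ satisfy −1 ≤ φ_q ≤ 1 for all q and the summation constraint ∑_{q=1}^N φ_q = 2 − N. Let L : Fin N → ℝ satisfy ∑_{q=1}^N L_q = 0 and L_q = 0 whenever φ_q = −1. Then for every index p with φ_p = 1 one has L_p = 0; that is, the volume distribution is deactivated inside the bulk-phase region of any phase. -/
/-- If the order parameters lie in `[-1, 1]` and satisfy the summation constraint
`∑ φ_q = 2 - N`, and the volume distribution functions `L_q` satisfy `∑ L_q = 0`
and vanish wherever the corresponding phase is absent (`φ_q = -1 → L_q = 0`),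
then `L_p = 0` wherever `φ_p = 1`: the volume distribution is deactivated inside
the bulk-phase region of any phase. -/
theorem volDist_deactivated_in_bulk (N : ℕ) (hN : 1 ≤ N)
    (φ L : Fin N → ℝ)
    (hbound : ∀ q, -1 ≤ φ q ∧ φ q ≤ 1)
    (hsumφ : ∑ q, φ q = 2 - (N : ℝ))
    (hsumL : ∑ q, L q = 0)
    (habs : ∀ q, φ q = -1 → L q = 0) :
    ∀ p, φ p = 1 → L p = 0 := by
  intro p hp
  -- sum over q ≠ p of (φ q + 1) is 0
  have hcard : (Finset.univ : Finset (Fin N)).card = N := by simp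
  have hsplitφ : ∑ q ∈ Finset.univ \ {p}, (φ q + 1) = 0 := by
    have h1 : ∑ q ∈ Finset.univ \ {p}, (φ q + 1)
        = (∑ q, (φ q + 1)) - (φ p + 1) := by
      rw [Finset.sum_sdiff_eq_sub (by simp)]
      simp
    have h2 : ∑ q, (φ q + 1) = (2 - (N : ℝ)) + N := by
      rw [Finset.sum_add_distrib, hsumφ]
      simp [hcard]
    rw [h1, h2, hp]; ring
  have hall : ∀ q ∈ Finset.univ \ {p}, φ q + 1 = 0 := by
    intro q hq
    have := (Finset.sum_eq_zero_iff_of_nonneg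
      (fun r _ => by linarith [(hbound r).1])).mp hsplitφ
    exact this q hq
  have hLzero : ∀ q ∈ Finset.univ \ {p}, L q = 0 := by
    intro q hq
    exact habs q (by linarith [hall q hq])
  have : ∑ q ∈ Finset.univ \ {p}, L q = 0 := Finset.sum_eq_zero hLzero
  have h1 : ∑ q ∈ Finset.univ \ {p}, L q = (∑ q, L q) - L p := by
    rw [Finset.sum_sdiff_eq_sub (by simp)]
    simp
  rw [h1, hsumL] at this
  linarith
end

section
/- Let N ≥ 1 and let φ : Fin N → ℝ be such that φ_q > −1 for at least one index q. Define the clipping step φ*_p = min(1, max(−1, φ_p)), the volume fractions C*_p = (1+φ*_p)/2, the normalization S = ∑_{q=1}^N C*_q (which is positive), and the rescaled order parameters φ**_p = 2 C*_p / S − 1. Then: (i) −1 ≤ φ**_p ≤ 1 for all p; (ii) ∑_{p=1}^N φ**_p = 2 − N; and (iii) for every p with φ_p ≤ −1 one has φ**_p = −1. -/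
/-- Clipping step of the boundedness mapping: `clip x = min 1 (max (-1) x)`. -/
noncomputable def clip (x : ℝ) : ℝ := min 1 (max (-1) x)

/-- Clipped volume fraction: `C*_p = (1 + clip φ_p) / 2`. -/
noncomputable def Cstar {N : ℕ} (φ : Fin N → ℝ) (p : Fin N) : ℝ := (1 + clip (φ p)) / 2

/-- Normalization of the rescaling step: `S = ∑ q, C*_q`. -/
noncomputable def Snorm {N : ℕ} (φ : Fin N → ℝ) : ℝ := ∑ q, Cstar φ q

/-- Rescaled order parameter: `φ**_p = 2 C*_p / S - 1`. -/
noncomputable def φss {N : ℕ} (φ : Fin N → ℝ) (p : Fin N) : ℝ :=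
  2 * Cstar φ p / Snorm φ - 1

/-- Properties of the clipping and rescaling steps of the boundedness mapping:
if some `φ_q > -1`, then the normalization is positive, the rescaled order
parameters lie in `[-1,1]`, satisfy the summation constraint `∑ φ**_p = 2 - N`,
and any phase with `φ_p ≤ -1` satisfies `φ**_p = -1`. -/
theorem boundedness_clip_rescale (N : ℕ) (hN : 1 ≤ N) (φ : Fin N → ℝ)
    (hex : ∃ q, -1 < φ q) :
    0 < Snorm φ ∧
    (∀ p, -1 ≤ φss φ p ∧ φss φ p ≤ 1) ∧
    (∑ p, φss φ p) = 2 - (N : ℝ) ∧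
    (∀ p, φ p ≤ -1 → φss φ p = -1) := by
  obtain ⟨q, hq⟩ := hex
  have hC0 : ∀ p, 0 ≤ Cstar φ p := by
    intro p
    have : -1 ≤ clip (φ p) := le_min (by norm_num) (le_max_left _ _)
    unfold Cstar
    linarith [this]
  have hCq : 0 < Cstar φ q := by
    have : -1 < clip (φ q) := lt_min (by norm_num) (lt_max_of_lt_right hq)
    unfold Cstar
    linarith
  have hS : 0 < Snorm φ := by
    unfold Snorm
    exact Finset.sum_pos' (fun p _ => hC0 p) ⟨q, Finset.mem_univ q, hCq⟩
  have hCS : ∀ p, Cstar φ p ≤ Snorm φ := by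
    intro p
    exact Finset.single_le_sum (fun i _ => hC0 i) (Finset.mem_univ p)
  refine ⟨hS, ?_, ?_, ?_⟩
  · intro p
    constructor
    · unfold φss
      have : 0 ≤ 2 * Cstar φ p / Snorm φ := div_nonneg (by linarith [hC0 p]) hS.le
      linarith
    · unfold φss
      have h2 : 2 * Cstar φ p / Snorm φ ≤ 2 := by
        rw [div_le_iff₀ hS]
        nlinarith [hCS p, hC0 p]
      linarith
  · unfold φss
    rw [Finset.sum_sub_distrib]
    simp only [Finset.sum_const, Finset.card_univ, Fintype.card_fin, nsmul_eq_mul, mul_one]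
    have : ∑ p, 2 * Cstar φ p / Snorm φ = 2 := by
      rw [← Finset.sum_div, ← Finset.mul_sum]
      rw [show (∑ p, Cstar φ p) = Snorm φ from rfl]
      rw [mul_div_assoc, div_self hS.ne', mul_one]
    rw [this]
  · intro p hp
    have hclip : clip (φ p) = -1 := by
      unfold clip
      rw [max_eq_left hp]
      norm_num
    unfold φss Cstar
    rw [hclip]
    norm_num
end

section
/- Let N ≥ 1 and fix real constants γ_t ≠ 0, Δt, M_0, λ_0, and η ≠ 0. Let φⁿ, φ̂, cv, g, d, Lc : Fin N → ℝ satisfy: ∑_p φⁿ_p = 2 − N, ∑_p φ̂_p = γ_t (2 − N), ∑_p cv_p = 0, and ∑_p Lc_p = 0. Define L̃^s = ∑_p ( g_p − η² d_p ) and the update γ_t φⁿ⁺¹_p = φ̂_p + Δt ( −cv_p + M_0 λ_0 d_p − (M_0 λ_0/η²)( g_p − ((1+φⁿ_p)/2) L̃^s ) + Lc_p ). Then ∑_{p=1}^N φⁿ⁺¹_p = 2 − N. -/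
/-- Per-cell induction step of Theorem 6 (discrete summation constraint of the
proposed scheme for the multiphase conservative Allen-Cahn model): if the order
parameters at the current level satisfy `∑ φⁿ_p = 2 - N`, the history term
satisfies `∑ φ̂_p = γ_t (2 - N)`, the discrete convection terms and the discrete
mass-conservation Lagrange multipliers each sum to zero over the phases, and each
phase is updated by
`γ_t φⁿ⁺¹_p = φ̂_p + Δt (-cv_p + M₀λ₀ d_p - (M₀λ₀/η²)(g_p - ((1+φⁿ_p)/2) L̃ˢ) + Lc_p)`
with `L̃ˢ = ∑ p, (g_p - η² d_p)`, then `∑ φⁿ⁺¹_p = 2 - N`. -/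
theorem discrete_summation_constraint (N : ℕ) (hN : 1 ≤ N)
    (γt Δt M₀ lam₀ η : ℝ) (hγt : γt ≠ 0) (hη : η ≠ 0)
    (φn φnext φhat cv g d Lc : Fin N → ℝ)
    (hφn : ∑ p, φn p = 2 - (N : ℝ))
    (hφhat : ∑ p, φhat p = γt * (2 - (N : ℝ)))
    (hcv : ∑ p, cv p = 0)
    (hLc : ∑ p, Lc p = 0)
    (hupdate : ∀ p, γt * φnext p =
      φhat p + Δt * (-cv p + M₀ * lam₀ * d p
        - (M₀ * lam₀ / η ^ 2) * (g p - (1 + φn p) / 2 * (∑ q, (g q - η ^ 2 * d q)))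
        + Lc p)) :
    ∑ p, φnext p = 2 - (N : ℝ) := by
  have hη2 : (η:ℝ)^2 ≠ 0 := pow_ne_zero _ hη
  apply mul_left_cancel₀ hγt
  rw [Finset.mul_sum, Finset.sum_congr rfl fun p _ => hupdate p]
  have expand : ∀ p : Fin N,
      φhat p + Δt * (-cv p + M₀ * lam₀ * d p
        - (M₀ * lam₀ / η ^ 2) * (g p - (1 + φn p) / 2 * (∑ q, (g q - η ^ 2 * d q)))
        + Lc p)
      = φhat p + (-Δt) * cv p + (Δt * M₀ * lam₀) * d p
        + (-(Δt * M₀ * lam₀ / η ^ 2)) * g p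
        + (Δt * M₀ * lam₀ / η ^ 2 * (∑ q, (g q - η ^ 2 * d q)) / 2)
        + (Δt * M₀ * lam₀ / η ^ 2 * (∑ q, (g q - η ^ 2 * d q)) / 2) * φn p
        + Δt * Lc p := by
    intro p; ring
  rw [Finset.sum_congr rfl fun p _ => expand p]
  simp only [Finset.sum_add_distrib, ← Finset.mul_sum, Finset.sum_const,
    Finset.card_univ, Fintype.card_fin, nsmul_eq_mul,
    hφhat, hcv, hLc, hφn]
  have hs : (∑ q, (g q - η ^ 2 * d q)) = (∑ q, g q) - η^2 * ∑ q, d q := by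
    rw [Finset.sum_sub_distrib, Finset.mul_sum]
  rw [hs]
  field_simp
  ring
end
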